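/- Let L be a real Lie algebra, V₁ ⊆ L a linear subspace equipped with a norm ‖·‖₁, and let p, q ≥ 1. Let N be a seminorm on L such that N([W₁, …, W_{p+q}]) ≤ ∏_{i=1}^{p+q} ‖W_i‖₁ for every sequence W₁, …, W_{p+q} of elements of V₁, where the bracket is right-nested. Suppose Z_p = Σ_{n=1}^{N₁} [X_{n,1}, …, X_{n,p}] and Z_q = Σ_{m=1}^{N₂} [Y_{m,1}, …, Y_{m,q}] with all X_{n,i}, Y_{m,j} ∈ V₁. Then N([Z_p, Z_q]) ≤ 2^{min(p,q)} · (Σ_{n=1}^{N₁} ∏_{i=1}^{p} ‖X_{n,i}‖₁) · (Σ_{m=1}^{N₂} ∏_{j=1}^{q} ‖Y_{m,j}‖₁). -/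

import Mathlib

/-- The right-nested iterated Lie bracket `[X₁, …, X_j]` of a list of elements of a Lie
ring: `[X] = X` and `[X₁, …, X_j] = ⁅X₁, [X₂, …, X_j]⁆`. (The empty list is sent to `0`.) -/
def nestedBracket {L : Type*} [LieRing L] : List L → L
  | [] => 0
  | [a] => a
  | a :: b :: rest => ⁅a, nestedBracket (b :: rest)⁆

section AuxNestedBracket

set_option linter.unusedSectionVars false

variable {L : Type*} [LieRing L] [LieAlgebra ℝ L]

lemma nb_cons (a : L) (l : List L) (h : l ≠ []) :
    nestedBracket (a :: l) = ⁅a, nestedBracket l⁆ := by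
  cases l with
  | nil => exact absurd rfl h
  | cons b rest => rfl

lemma nb_append (l₁ l₂ : List L) (h : l₂ ≠ []) :
    nestedBracket (l₁ ++ [nestedBracket l₂]) = nestedBracket (l₁ ++ l₂) := by
  induction l₁ with
  | nil => simp [nestedBracket]
  | cons a t ih =>
      rw [List.cons_append, List.cons_append,
        nb_cons a (t ++ [nestedBracket l₂]) (by simp),
        nb_cons a (t ++ l₂) (by simp [h]), ih]

lemma nb_push (l : List L) (x c : L) :
    nestedBracket (l ++ [⁅x, c⁆]) = nestedBracket ((l ++ [x]) ++ [c]) := by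
  have h2 : nestedBracket [x, c] = ⁅x, c⁆ := rfl
  rw [← h2, nb_append l [x, c] (by simp), List.append_assoc]
  rfl

lemma nb_last_sub (l : List L) (u v : L) :
    nestedBracket (l ++ [u - v]) = nestedBracket (l ++ [u]) - nestedBracket (l ++ [v]) := by
  induction l with
  | nil => rfl
  | cons a t ih =>
      rw [List.cons_append, List.cons_append, List.cons_append,
        nb_cons a _ (by simp), nb_cons a _ (by simp), nb_cons a _ (by simp), ih, lie_sub]


lemma key (N : Seminorm ℝ L) (V₁ : Submodule ℝ L) (nrm1 : L → ℝ)
    (hnn : ∀ w ∈ V₁, 0 ≤ nrm1 w) :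
    ∀ (xs ws : List L) (b : L) (C : ℝ), xs ≠ [] → (∀ x ∈ xs, x ∈ V₁) →
      (∀ w ∈ ws, w ∈ V₁) → 0 ≤ C →
      (∀ zs : List L, zs.length = ws.length + xs.length → (∀ z ∈ zs, z ∈ V₁) →
        N (nestedBracket (zs ++ [b])) ≤ (zs.map nrm1).prod * C) →
      N (nestedBracket (ws ++ [⁅nestedBracket xs, b⁆])) ≤
        2 ^ (xs.length - 1) * (ws.map nrm1).prod * (xs.map nrm1).prod * C := by
  intro xs
  induction xs with
  | nil => intro _ _ _ h; exact absurd rfl h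
  | cons x xs' ih =>
      intro ws b C _ hxsV hwsV hC H
      have hxV : x ∈ V₁ := hxsV x (by simp)
      cases xs' with
      | nil =>
          -- base case: xs = [x]
          have e1 : nestedBracket [x] = x := rfl
          have e2 : nestedBracket (ws ++ [⁅x, b⁆]) = nestedBracket ((ws ++ [x]) ++ [b]) :=
            nb_push ws x b
          have := H (ws ++ [x]) (by simp) (by
            intro z hz
            rcases List.mem_append.1 hz with h | h
            · exact hwsV z h
            · simp at h; subst h; exact hxV)
          rw [e1, e2]
          refine this.trans (le_of_eq ?_)
          simp only [List.map_append, List.prod_append, List.map_cons, List.map_nil,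
            List.prod_cons, List.prod_nil, List.length_cons, List.length_nil, pow_zero]
          ring
      | cons y ys =>
          set xs' := y :: ys with hxs'
          have hxs'ne : xs' ≠ [] := by simp [hxs']
          have hxs'V : ∀ z ∈ xs', z ∈ V₁ := fun z hz => hxsV z (by simp [hz])
          have hA : nestedBracket (x :: xs') = ⁅x, nestedBracket xs'⁆ := nb_cons x xs' hxs'ne
          have hsplit : ⁅nestedBracket (x :: xs'), b⁆ =
              ⁅x, ⁅nestedBracket xs', b⁆⁆ - ⁅nestedBracket xs', ⁅x, b⁆⁆ := by
            rw [hA, lie_lie]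
          rw [hsplit, nb_last_sub]
          refine (map_sub_le_add N _ _).trans ?_
          -- Term 1
          have t1 : N (nestedBracket (ws ++ [⁅x, ⁅nestedBracket xs', b⁆⁆])) ≤
              2 ^ (xs'.length - 1) * ((ws ++ [x]).map nrm1).prod * (xs'.map nrm1).prod * C := by
            rw [nb_push]
            exact ih (ws ++ [x]) b C hxs'ne hxs'V
              (by intro w hw; rcases List.mem_append.1 hw with h | h
                  · exact hwsV w h
                  · simp at h; subst h; exact hxV) hC
              (by intro zs hlen hzs
                  exact H zs (by simp at hlen ⊢; omega) hzs)
          -- Term 2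
          have t2 : N (nestedBracket (ws ++ [⁅nestedBracket xs', ⁅x, b⁆⁆])) ≤
              2 ^ (xs'.length - 1) * (ws.map nrm1).prod * (xs'.map nrm1).prod * (nrm1 x * C) := by
            exact ih ws ⁅x, b⁆ (nrm1 x * C) hxs'ne hxs'V hwsV
              (mul_nonneg (hnn x hxV) hC)
              (by intro zs hlen hzs
                  rw [nb_push]
                  have := H (zs ++ [x]) (by simp at hlen ⊢; omega)
                    (by intro z hz; rcases List.mem_append.1 hz with h | h
                        · exact hzs z h
                        · simp at h; subst h; exact hxV)
                  refine this.trans (le_of_eq ?_)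
                  simp only [List.map_append, List.prod_append, List.map_cons, List.map_nil,
                    List.prod_cons, List.prod_nil]
                  ring)
          refine (add_le_add t1 t2).trans (le_of_eq ?_)
          obtain ⟨k, hk2⟩ : ∃ k, xs'.length = k + 1 := ⟨ys.length, by simp [hxs']⟩
          have e0 : xs'.length - 1 = k := by omega
          have e1 : (x :: xs').length - 1 = k + 1 := by simp [hk2]
          rw [e0, e1, pow_succ]
          simp only [List.map_append, List.prod_append, List.map_cons, List.map_nil,
            List.prod_cons, List.prod_nil]
          ring

lemma sum_lie' {ι : Type*} (s : Finset ι) (f : ι → L) (y : L) :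
    ⁅∑ i ∈ s, f i, y⁆ = ∑ i ∈ s, ⁅f i, y⁆ := by
  classical
  induction s using Finset.induction with
  | empty => simp
  | insert a s hnm ih => rw [Finset.sum_insert hnm, Finset.sum_insert hnm, add_lie, ih]

lemma lie_sum' {ι : Type*} (s : Finset ι) (x : L) (f : ι → L) :
    ⁅x, ∑ i ∈ s, f i⁆ = ∑ i ∈ s, ⁅x, f i⁆ := by
  classical
  induction s using Finset.induction with
  | empty => simp
  | insert a s hnm ih => rw [Finset.sum_insert hnm, Finset.sum_insert hnm, lie_add, ih]

lemma ofFn_get_cast {α : Type*} (n : ℕ) (l : List α) (h : l.length = n) :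
    List.ofFn (fun i : Fin n => l.get (Fin.cast h.symm i)) = l := by
  subst h
  simp [List.ofFn_getElem]

lemma seminorm_sum_le {E : Type*} [AddCommGroup E] [Module ℝ E] (N : Seminorm ℝ E)
    {ι : Type*} (s : Finset ι) (f : ι → E) :
    N (∑ i ∈ s, f i) ≤ ∑ i ∈ s, N (f i) := by
  classical
  induction s using Finset.induction with
  | empty => simp
  | insert a s hnotmem ih =>
      rw [Finset.sum_insert hnotmem, Finset.sum_insert hnotmem]
      exact (map_add_le_add N _ _).trans (add_le_add_right ih _)


end AuxNestedBracket

/-- Submultiplicativity of the layer norms (Lemma 3.4 of the paper, abstract form). Let `L`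
be a real Lie algebra, `V₁ ⊆ L` a subspace equipped with a norm `nrm1`, and `N` a seminorm
on `L` bounded on right-nested brackets of `p+q` elements of `V₁` by the product of their
`nrm1`-norms. If `Z_p = Σ_n [X_{n,1}, …, X_{n,p}]` and `Z_q = Σ_m [Y_{m,1}, …, Y_{m,q}]`
with all entries in `V₁`, then
`N([Z_p, Z_q]) ≤ 2^{min(p,q)} · (Σ_n ∏_i nrm1 (X n i)) · (Σ_m ∏_j nrm1 (Y m j))`. -/
theorem seminorm_bracket_le
    {L : Type*} [LieRing L] [LieAlgebra ℝ L]
    (V₁ : Submodule ℝ L) (nrm1 : L → ℝ)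
    (hnn : ∀ w ∈ V₁, 0 ≤ nrm1 w)
    (hdef : ∀ w ∈ V₁, nrm1 w = 0 ↔ w = 0)
    (hhomog : ∀ (c : ℝ), ∀ w ∈ V₁, nrm1 (c • w) = |c| * nrm1 w)
    (htri : ∀ w₁ ∈ V₁, ∀ w₂ ∈ V₁, nrm1 (w₁ + w₂) ≤ nrm1 w₁ + nrm1 w₂)
    (p q : ℕ) (hp : 1 ≤ p) (hq : 1 ≤ q)
    (N : Seminorm ℝ L)
    (hbound : ∀ W : Fin (p + q) → L, (∀ i, W i ∈ V₁) →
      N (nestedBracket (List.ofFn W)) ≤ ∏ i, nrm1 (W i))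
    (N₁ N₂ : ℕ)
    (X : Fin N₁ → Fin p → L) (hX : ∀ n i, X n i ∈ V₁)
    (Y : Fin N₂ → Fin q → L) (hY : ∀ m j, Y m j ∈ V₁)
    (Zp Zq : L)
    (hZp : Zp = ∑ n : Fin N₁, nestedBracket (List.ofFn (X n)))
    (hZq : Zq = ∑ m : Fin N₂, nestedBracket (List.ofFn (Y m))) :
    N ⁅Zp, Zq⁆ ≤
      2 ^ min p q * ((∑ n : Fin N₁, ∏ i : Fin p, nrm1 (X n i)) *
        (∑ m : Fin N₂, ∏ j : Fin q, nrm1 (Y m j))) := by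
  classical
  -- list-form of hbound
  have hboundList : ∀ l : List L, l.length = p + q → (∀ z ∈ l, z ∈ V₁) →
      N (nestedBracket l) ≤ (l.map nrm1).prod := by
    intro l hl hlV
    have hW := hbound (fun i : Fin (p + q) => l.get (Fin.cast hl.symm i))
      (fun i => hlV _ (l.get_mem _))
    rw [ofFn_get_cast (p + q) l hl] at hW
    refine hW.trans (le_of_eq ?_)
    have h1 : (l.map nrm1).prod =
        (List.ofFn (fun i : Fin (p + q) =>
          nrm1 (l.get (Fin.cast hl.symm i)))).prod := by
      conv_lhs => rw [← ofFn_get_cast (p + q) l hl]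
      rw [List.map_ofFn]
      rfl
    rw [h1, List.prod_ofFn]
  -- per-pair bound
  have pair : ∀ (n : Fin N₁) (m : Fin N₂),
      N ⁅nestedBracket (List.ofFn (X n)), nestedBracket (List.ofFn (Y m))⁆ ≤
        2 ^ min p q * ((∏ i : Fin p, nrm1 (X n i)) * (∏ j : Fin q, nrm1 (Y m j))) := by
    intro n m
    set Xl := List.ofFn (X n) with hXl
    set Yl := List.ofFn (Y m) with hYl
    have hXlne : Xl ≠ [] := by
      simp [hXl, ← List.length_pos_iff]; omega
    have hYlne : Yl ≠ [] := by
      simp [hYl, ← List.length_pos_iff]; omega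
    have hXlV : ∀ z ∈ Xl, z ∈ V₁ := by
      intro z hz; rw [hXl, List.mem_ofFn] at hz; obtain ⟨i, rfl⟩ := hz; exact hX n i
    have hYlV : ∀ z ∈ Yl, z ∈ V₁ := by
      intro z hz; rw [hYl, List.mem_ofFn] at hz; obtain ⟨j, rfl⟩ := hz; exact hY m j
    have hPX : (Xl.map nrm1).prod = ∏ i : Fin p, nrm1 (X n i) := by
      rw [hXl, List.map_ofFn, List.prod_ofFn]; rfl
    have hPY : (Yl.map nrm1).prod = ∏ j : Fin q, nrm1 (Y m j) := by
      rw [hYl, List.map_ofFn, List.prod_ofFn]; rfl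
    have hPXnn : 0 ≤ (Xl.map nrm1).prod := by
      apply List.prod_nonneg
      intro a ha
      simp only [List.mem_map] at ha
      obtain ⟨z, hz, rfl⟩ := ha
      exact hnn z (hXlV z hz)
    have hPYnn : 0 ≤ (Yl.map nrm1).prod := by
      apply List.prod_nonneg
      intro a ha
      simp only [List.mem_map] at ha
      obtain ⟨z, hz, rfl⟩ := ha
      exact hnn z (hYlV z hz)
    rcases le_or_gt p q with hpq | hqp
    · -- p ≤ q : expand the left bracket
      have hmin : min p q = p := min_eq_left hpq
      have hkey := key N V₁ nrm1 hnn Xl [] (nestedBracket Yl) ((Yl.map nrm1).prod)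
        hXlne hXlV (by simp) hPYnn
        (by intro zs hlen hzs
            rw [nb_append zs Yl hYlne]
            have := hboundList (zs ++ Yl) (by simp [hXl, hYl] at hlen ⊢; omega)
              (by intro z hz; rcases List.mem_append.1 hz with h | h
                  · exact hzs z h
                  · exact hYlV z h)
            refine this.trans (le_of_eq ?_)
            rw [List.map_append, List.prod_append])
        -- hkey : N (nestedBracket ([] ++ [⁅nestedBracket Xl, nestedBracket Yl⁆])) ≤ ...
      simp only [List.nil_append] at hkey
      have e : nestedBracket [⁅nestedBracket Xl, nestedBracket Yl⁆] =
          ⁅nestedBracket Xl, nestedBracket Yl⁆ := rfl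
      rw [e] at hkey
      refine hkey.trans ?_
      have hXlen : Xl.length = p := by simp [hXl]
      rw [hPX, hPY, hmin, hXlen]
      simp only [List.map_nil, List.prod_nil, one_mul, mul_one]
      have h2 : (2:ℝ) ^ (p - 1) ≤ 2 ^ p :=
        pow_le_pow_right₀ (by norm_num) (by omega)
      have hx0 : 0 ≤ ∏ i : Fin p, nrm1 (X n i) := hPX ▸ hPXnn
      have hy0 : 0 ≤ ∏ j : Fin q, nrm1 (Y m j) := hPY ▸ hPYnn
      nlinarith [mul_le_mul_of_nonneg_right h2 (mul_nonneg hx0 hy0)]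
    · -- q < p : use antisymmetry and expand the right bracket
      have hmin : min p q = q := min_eq_right (le_of_lt hqp)
      have hskew : N ⁅nestedBracket Xl, nestedBracket Yl⁆ =
          N ⁅nestedBracket Yl, nestedBracket Xl⁆ := by
        rw [← lie_skew, map_neg_eq_map]
      rw [hskew]
      have hkey := key N V₁ nrm1 hnn Yl [] (nestedBracket Xl) ((Xl.map nrm1).prod)
        hYlne hYlV (by simp) hPXnn
        (by intro zs hlen hzs
            rw [nb_append zs Xl hXlne]
            have := hboundList (zs ++ Xl) (by simp [hXl, hYl] at hlen ⊢; omega)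
              (by intro z hz; rcases List.mem_append.1 hz with h | h
                  · exact hzs z h
                  · exact hXlV z h)
            refine this.trans (le_of_eq ?_)
            rw [List.map_append, List.prod_append])
      simp only [List.nil_append] at hkey
      have e : nestedBracket [⁅nestedBracket Yl, nestedBracket Xl⁆] =
          ⁅nestedBracket Yl, nestedBracket Xl⁆ := rfl
      rw [e] at hkey
      refine hkey.trans ?_
      have hYlen : Yl.length = q := by simp [hYl]
      rw [hPX, hPY, hmin, hYlen]
      simp only [List.map_nil, List.prod_nil, one_mul, mul_one]
      have h2 : (2:ℝ) ^ (q - 1) ≤ 2 ^ q :=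
        pow_le_pow_right₀ (by norm_num) (by omega)
      have hx0 : 0 ≤ ∏ i : Fin p, nrm1 (X n i) := hPX ▸ hPXnn
      have hy0 : 0 ≤ ∏ j : Fin q, nrm1 (Y m j) := hPY ▸ hPYnn
      nlinarith [mul_le_mul_of_nonneg_right h2 (mul_nonneg hx0 hy0)]
  -- expand the double sum
  have hexp : ⁅Zp, Zq⁆ = ∑ n : Fin N₁, ∑ m : Fin N₂,
      ⁅nestedBracket (List.ofFn (X n)), nestedBracket (List.ofFn (Y m))⁆ := by
    rw [hZp, hZq]
    rw [sum_lie']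
    exact Finset.sum_congr rfl (fun n _ => lie_sum' _ _ _)
  rw [hexp]
  have step1 := seminorm_sum_le N Finset.univ
    (fun n : Fin N₁ => ∑ m : Fin N₂,
      ⁅nestedBracket (List.ofFn (X n)), nestedBracket (List.ofFn (Y m))⁆)
  refine step1.trans ?_
  have step2 : ∀ n : Fin N₁,
      N (∑ m : Fin N₂,
        ⁅nestedBracket (List.ofFn (X n)), nestedBracket (List.ofFn (Y m))⁆) ≤
      ∑ m : Fin N₂, 2 ^ min p q *
        ((∏ i : Fin p, nrm1 (X n i)) * (∏ j : Fin q, nrm1 (Y m j))) := by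
    intro n
    refine (seminorm_sum_le N Finset.univ _).trans ?_
    exact Finset.sum_le_sum (fun m _ => pair n m)
  refine (Finset.sum_le_sum (fun n _ => step2 n)).trans (le_of_eq ?_)
  rw [Finset.sum_mul_sum, Finset.mul_sum]
  refine Finset.sum_congr rfl (fun n _ => ?_)
  rw [Finset.mul_sum]
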